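/- Define Λ : ℝ⁴ → Matrix (Fin 4) (Fin 4) ℝ at the point w = (u, ξ₁, ξ₂, ξ₃) by the rows: (0, 2u, 1, −u²); (−2u, 0, 2ξ₂, −2ξ₃); (−1, −2ξ₂, 0, ξ₁); (u², 2ξ₃, −ξ₁, 0). Then Λ satisfies the Poisson–Jacobi condition at every point of ℝ⁴: for all i, j, k ∈ Fin 4 and all w, Σ_{l ∈ Fin 4} (Λ(w) i l * ∂_l Λ_{j k}(w) + Λ(w) j l * ∂_l Λ_{k i}(w) + Λ(w) k l * ∂_l Λ_{i j}(w)) = 0. (This is the structure matrix of the Poisson bracket on M × sl(2)* arising from the projective action of SL(2) on the line.) -/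

import Mathlib

open Matrix

/-- Directional (partial) derivative of `f` at `w` in the `l`-th coordinate direction. -/
noncomputable def pd {n : ℕ} (l : Fin n) (f : (Fin n → ℝ) → ℝ) (w : Fin n → ℝ) : ℝ :=
  fderiv ℝ f w (Pi.single l 1)

/-- The Poisson–Jacobi condition for a matrix-valued map `Λ` on `ℝⁿ`. -/
def PoissonJacobi {n : ℕ} (Λ : (Fin n → ℝ) → Matrix (Fin n) (Fin n) ℝ) : Prop :=
  ∀ (i j k : Fin n) (w : Fin n → ℝ),
    ∑ l, (Λ w i l * pd l (fun v => Λ v j k) w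
      + Λ w j l * pd l (fun v => Λ v k i) w
      + Λ w k l * pd l (fun v => Λ v i j) w) = 0

/-- The structure matrix of the Poisson bracket on `M × 𝔰𝔩(2)*` arising from the
projective action of `SL(2)` on the line; coordinates `w = (u, ξ₁, ξ₂, ξ₃)`. -/
noncomputable def lambdaSL2proj (w : Fin 4 → ℝ) : Matrix (Fin 4) (Fin 4) ℝ :=
  !![0, 2 * w 0, 1, -(w 0) ^ 2;
     -(2 * w 0), 0, 2 * w 2, -(2 * w 3);
     -1, -(2 * w 2), 0, w 1;
     (w 0) ^ 2, 2 * w 3, -(w 1), 0]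

lemma hproj (m : Fin 4) (w : Fin 4 → ℝ) :
    HasFDerivAt (fun v : Fin 4 → ℝ => v m)
      ((ContinuousLinearMap.proj m : (Fin 4 → ℝ) →L[ℝ] ℝ)) w := by
  exact (ContinuousLinearMap.proj m : (Fin 4 → ℝ) →L[ℝ] ℝ).hasFDerivAt

lemma pd_coord (l m : Fin 4) (w : Fin 4 → ℝ) :
    pd l (fun v => v m) w = if m = l then 1 else 0 := by
  unfold pd
  rw [(hproj m w).fderiv]
  simp [Pi.single_apply]

lemma pd_cmul (c : ℝ) (l m : Fin 4) (w : Fin 4 → ℝ) :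
    pd l (fun v => c * v m) w = if m = l then c else 0 := by
  unfold pd
  rw [((hproj m w).const_mul c).fderiv]
  simp [Pi.single_apply]

lemma pd_sq (c : ℝ) (l m : Fin 4) (w : Fin 4 → ℝ) :
    pd l (fun v => c * v m ^ 2) w = if m = l then c * (2 * w m) else 0 := by
  unfold pd
  have h : HasFDerivAt (fun v : Fin 4 → ℝ => c * v m ^ 2)
      (c • (w m • (ContinuousLinearMap.proj m : (Fin 4 → ℝ) →L[ℝ] ℝ)
        + w m • (ContinuousLinearMap.proj m : (Fin 4 → ℝ) →L[ℝ] ℝ))) w := by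
    have := ((hproj m w).mul (hproj m w)).const_mul c
    simpa [pow_two] using this
  rw [h.fderiv]
  simp [Pi.single_apply]
  split <;> ring

lemma pd_const (c : ℝ) (l : Fin 4) (w : Fin 4 → ℝ) : pd l (fun _ => c) w = 0 := by
  unfold pd; rw [fderiv_fun_const]; simp

lemma pd_two_mul (l m : Fin 4) (w : Fin 4 → ℝ) :
    pd l (fun v => 2 * v m) w = if m = l then 2 else 0 := pd_cmul 2 l m w

lemma pd_neg_two_mul (l m : Fin 4) (w : Fin 4 → ℝ) :
    pd l (fun v => -(2 * v m)) w = if m = l then -2 else 0 := by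
  rw [show (fun v : Fin 4 → ℝ => -(2 * v m)) = (fun v => (-2 : ℝ) * v m) from
    funext fun v => by ring]
  exact pd_cmul (-2) l m w

lemma pd_neg_coord (l m : Fin 4) (w : Fin 4 → ℝ) :
    pd l (fun v => -(v m)) w = if m = l then -1 else 0 := by
  rw [show (fun v : Fin 4 → ℝ => -(v m)) = (fun v => (-1 : ℝ) * v m) from
    funext fun v => by ring]
  exact pd_cmul (-1) l m w

lemma pd_sq' (l m : Fin 4) (w : Fin 4 → ℝ) :
    pd l (fun v => v m ^ 2) w = if m = l then 2 * w m else 0 := by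
  rw [show (fun v : Fin 4 → ℝ => v m ^ 2) = (fun v => (1 : ℝ) * v m ^ 2) from
    funext fun v => by ring]
  simpa using pd_sq 1 l m w

lemma pd_neg_sq (l m : Fin 4) (w : Fin 4 → ℝ) :
    pd l (fun v => -(v m ^ 2)) w = if m = l then -(2 * w m) else 0 := by
  rw [show (fun v : Fin 4 → ℝ => -(v m ^ 2)) = (fun v => (-1 : ℝ) * v m ^ 2) from
    funext fun v => by ring]
  simpa using pd_sq (-1) l m w

/-- `lambdaSL2proj` satisfies the Poisson–Jacobi condition. -/
theorem lambdaSL2proj_poissonJacobi : PoissonJacobi lambdaSL2proj := by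
  have hfin : ∀ m : Fin 4, m = 0 ∨ m = 1 ∨ m = 2 ∨ m = 3 := by decide
  intro i j k w
  rcases hfin i with hi | hi | hi | hi <;> subst hi <;>
  rcases hfin j with hj | hj | hj | hj <;> subst hj <;>
  rcases hfin k with hk | hk | hk | hk <;> subst hk <;>
  · simp only [lambdaSL2proj, Fin.sum_univ_four, Fin.isValue, cons_val', cons_val_zero,
      cons_val_one, head_cons, empty_val', cons_val_fin_one, head_fin_const, cons_val_two,
      tail_cons, cons_val_three, of_apply, pd_const, pd_two_mul,
      pd_neg_two_mul, pd_neg_coord, pd_coord, pd_sq', pd_neg_sq,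
      Fin.reduceEq, reduceIte]
    norm_num
    try ring
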